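/- Let T be a first-order theory with a model companion T*. If T* has the ground interpolation property, then T has the ground interpolation property; moreover, every ground interpolant computed with respect to T* is also a ground interpolant with respect to T. -/

import Mathlib

open FirstOrder FirstOrder.Language

universe u v w

namespace PaperFOL

variable {L : FirstOrder.Language.{u, v}}

/-- A sentence is universal: the universal closure of a quantifier-free formula. -/
def IsUniversalSentence (φ : L.Sentence) : Prop :=
  ∃ (n : ℕ) (ψ : L.BoundedFormula Empty n), ψ.IsQF ∧ φ = ψ.alls

/-- The universal fragment `T_∀` of a theory `T`: all universal sentences entailed by `T`. -/
def univFragment (T : L.Theory) : L.Theory :=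
  {φ | IsUniversalSentence φ ∧ T ⊨ᵇ φ}

/-- A sentence `φ` is satisfiable w.r.t. `T`: some model of `T` satisfies `φ`. -/
def SatWith (T : L.Theory) (φ : L.Sentence) : Prop :=
  Theory.IsSatisfiable (T ∪ {φ})

/-- `T` allows quantifier elimination. -/
def HasQE (T : L.Theory) : Prop :=
  ∀ {n : ℕ} (φ : L.BoundedFormula Empty n),
    ∃ ψ : L.BoundedFormula Empty n, ψ.IsQF ∧ T ⊨ᵇ φ.iff ψ

/-- Literals: atomic or negated atomic formulas. -/
inductive IsLiteral {n : ℕ} : L.BoundedFormula Empty n → Prop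
  | atom {φ : L.BoundedFormula Empty n} : φ.IsAtomic → IsLiteral φ
  | negAtom {φ : L.BoundedFormula Empty n} : φ.IsAtomic → IsLiteral φ.not

/-- Clauses: disjunctions of literals. -/
inductive IsClauseFormula {n : ℕ} : L.BoundedFormula Empty n → Prop
  | lit {φ : L.BoundedFormula Empty n} : IsLiteral φ → IsClauseFormula φ
  | sup {φ ψ : L.BoundedFormula Empty n} :
      IsClauseFormula φ → IsLiteral ψ → IsClauseFormula (φ ⊔ ψ)

/-- Two theories over the same signature are co-theories iff they have the same
universal consequences. -/
def CoTheories (T₁ T₂ : L.Theory) : Prop :=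
  ∀ φ : L.Sentence, IsUniversalSentence φ → (T₁ ⊨ᵇ φ ↔ T₂ ⊨ᵇ φ)

/-- The lift of an `L`-theory to the language with additional constants from `α`. -/
def liftT (α : Type w) (T : L.Theory) : (L[[α]]).Theory :=
  (L.lhomWithConstants α).onTheory T

/-- A theory is universal if all its axioms are universal sentences. -/
def IsUniversalTheory (T : L.Theory) : Prop :=
  ∀ φ ∈ T, IsUniversalSentence φ

section Interpolation

/-- `I` is a ground interpolant of `A` and `B` w.r.t. `T`, where `A` is a ground formula with
constants among the shared `Fin nc` and own `Fin na`, `B` with shared `Fin nc` and own `Fin nb`,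
and `I` only contains the shared constants `Fin nc`. -/
def IsGroundInterpolant (T : L.Theory) {nc na nb : ℕ}
    (A : (L[[Fin nc ⊕ Fin na]]).Sentence) (B : (L[[Fin nc ⊕ Fin nb]]).Sentence)
    (I : (L[[Fin nc]]).Sentence) : Prop :=
  I.IsQF ∧
    (liftT (Fin nc ⊕ Fin na) T ∪ {A}) ⊨ᵇ
      ((L.lhomWithConstantsMap (Sum.inl : Fin nc → Fin nc ⊕ Fin na)).onSentence I) ∧
    ¬ Theory.IsSatisfiable (liftT (Fin nc ⊕ Fin nb) T ∪
      {B, (L.lhomWithConstantsMap (Sum.inl : Fin nc → Fin nc ⊕ Fin nb)).onSentence I})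

/-- `A ∧ B` is unsatisfiable w.r.t. `T` (in the joint language with all constants). -/
def JointlyUnsat (T : L.Theory) {nc na nb : ℕ}
    (A : (L[[Fin nc ⊕ Fin na]]).Sentence) (B : (L[[Fin nc ⊕ Fin nb]]).Sentence) : Prop :=
  ¬ Theory.IsSatisfiable (liftT (Fin nc ⊕ (Fin na ⊕ Fin nb)) T ∪
      {(L.lhomWithConstantsMap (Sum.map id Sum.inl)).onSentence A,
       (L.lhomWithConstantsMap (Sum.map id Sum.inr)).onSentence B})

/-- `T` has the ground interpolation property. -/
def GroundInterpolation (T : L.Theory) : Prop :=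
  ∀ (nc na nb : ℕ) (A : (L[[Fin nc ⊕ Fin na]]).Sentence) (B : (L[[Fin nc ⊕ Fin nb]]).Sentence),
    A.IsQF → B.IsQF → JointlyUnsat T A B →
    ∃ I : (L[[Fin nc]]).Sentence, IsGroundInterpolant T A B I

end Interpolation

section Amalgamation

/-- `T` has the amalgamation property. -/
def Amalgamation (T : L.Theory) : Prop :=
  ∀ (A M₁ M₂ : Type w) [L.Structure A] [L.Structure M₁] [L.Structure M₂],
    A ⊨ T → M₁ ⊨ T → M₂ ⊨ T →
    ∀ (f₁ : A ↪[L] M₁) (f₂ : A ↪[L] M₂),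
      ∃ (N : Theory.ModelType.{u, v, w} T) (g₁ : M₁ ↪[L] N) (g₂ : M₂ ↪[L] N),
        ∀ a, g₁ (f₁ a) = g₂ (f₂ a)

/-- `T` has the sub-amalgamation property (the common substructure need not be a model). -/
def SubAmalgamation (T : L.Theory) : Prop :=
  ∀ (A M₁ M₂ : Type w) [L.Structure A] [L.Structure M₁] [L.Structure M₂],
    M₁ ⊨ T → M₂ ⊨ T →
    ∀ (f₁ : A ↪[L] M₁) (f₂ : A ↪[L] M₂),
      ∃ (N : Theory.ModelType.{u, v, w} T) (g₁ : M₁ ↪[L] N) (g₂ : M₂ ↪[L] N),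
        ∀ a, g₁ (f₁ a) = g₂ (f₂ a)

/-- `T` has the strong sub-amalgamation property. -/
def StrongSubAmalgamation (T : L.Theory) : Prop :=
  ∀ (A M₁ M₂ : Type w) [L.Structure A] [L.Structure M₁] [L.Structure M₂],
    M₁ ⊨ T → M₂ ⊨ T →
    ∀ (f₁ : A ↪[L] M₁) (f₂ : A ↪[L] M₂),
      ∃ (N : Theory.ModelType.{u, v, w} T) (g₁ : M₁ ↪[L] N) (g₂ : M₂ ↪[L] N),
        (∀ a, g₁ (f₁ a) = g₂ (f₂ a)) ∧
        (∀ m₁ m₂, g₁ m₁ = g₂ m₂ → ∃ a, m₁ = f₁ a ∧ m₂ = f₂ a)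

end Amalgamation

section ModelCompanion

/-- `T` is model complete: every embedding between models of `T` is elementary. -/
def IsModelComplete (T : L.Theory) : Prop :=
  ∀ (M N : Type w) [L.Structure M] [L.Structure N], M ⊨ T → N ⊨ T →
    ∀ (f : M ↪[L] N) (k : ℕ) (φ : L.Formula (Fin k)) (x : Fin k → M),
      φ.Realize (f ∘ x) ↔ φ.Realize x

/-- `T*` is a model companion of `T`. -/
def IsModelCompanion (T Ts : L.Theory) : Prop :=
  CoTheories T Ts ∧ IsModelComplete.{u, v, w} Ts

/-- The diagram of a structure: all literal sentences (with constants for all elements)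
true in the structure. -/
def diagram (A : Type w) [L.Structure A] : (L[[A]]).Theory :=
  {φ : (L[[A]]).Sentence | IsLiteral φ ∧ A ⊨ φ}

/-- `T*` is a model completion of `T`. -/
def IsModelCompletion (T Ts : L.Theory) : Prop :=
  IsModelCompanion.{u, v, w} T Ts ∧
    ∀ (A : Type w) [L.Structure A], A ⊨ T →
      Theory.IsComplete (liftT A Ts ∪ diagram A)

end ModelCompanion

end PaperFOL


/-! Whether a quantifier-free sentence `S` over finitely many fresh constants `x̄` is
satisfiable in a model of `T` is the negation of `T ⊨ ∀ x̄, ¬ S(x̄)`, and `∀ x̄, ¬ S(x̄)` is a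
universal sentence. So co-theories agree on it, and with it on `A ∧ B` being jointly
unsatisfiable and on the two conditions that define a ground interpolant, all of which are of
this form. -/

namespace FirstOrder.Language

variable {L : Language.{u, v}}

namespace BoundedFormula.IsQF

variable {α : Type*} {n : ℕ} {φ : L.BoundedFormula α n}

theorem mapTermRel {L' : Language} {β : Type*} {g : ℕ → ℕ}
    {ft : ∀ n, L.Term (α ⊕ Fin n) → L'.Term (β ⊕ Fin (g n))}
    {fr : ∀ n, L.Relations n → L'.Relations n}
    {h : ∀ n, L'.BoundedFormula β (g (n + 1)) → L'.BoundedFormula β (g n + 1)}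
    (hφ : φ.IsQF) : (φ.mapTermRel ft fr h).IsQF := by
  induction hφ with
  | falsum => exact isQF_bot
  | of_isAtomic ha =>
    cases ha with
    | equal => exact (IsAtomic.equal _ _).isQF
    | rel => exact (IsAtomic.rel _ _).isQF
  | imp _ _ ih₁ ih₂ => exact ih₁.imp ih₂

theorem onBoundedFormula {L' : Language} (g : L →ᴸ L') (hφ : φ.IsQF) :
    (g.onBoundedFormula φ).IsQF := by
  induction hφ with
  | falsum => exact isQF_bot
  | of_isAtomic ha =>
    cases ha with
    | equal => exact (IsAtomic.equal _ _).isQF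
    | rel => exact (IsAtomic.rel _ _).isQF
  | imp _ _ ih₁ ih₂ => exact ih₁.imp ih₂

end BoundedFormula.IsQF

theorem Formula.isQF_equivSentence_symm {α : Type*} {S : L[[α]].Sentence} (hS : S.IsQF) :
    (Formula.equivSentence.symm S).IsQF :=
  -- `equivSentence.symm` is `constantsVarsEquiv` followed by a relabelling, both `mapTermRel`s.
  hS.mapTermRel.mapTermRel

namespace Theory

variable {T : L.Theory}

theorem isSatisfiable_union_singleton_iff {φ : L.Sentence} :
    (T ∪ {φ}).IsSatisfiable ↔ ∃ M : ModelType.{u, v, max u v} T, M ⊨ φ := by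
  constructor
  · rintro ⟨M⟩
    obtain ⟨hT, hφ⟩ := model_union_iff.1 M.is_model
    exact ⟨ModelType.of T M, model_singleton_iff.1 hφ⟩
  · rintro ⟨M, hφ⟩
    have : M ⊨ T ∪ {φ} := model_union_iff.2 ⟨M.is_model, model_singleton_iff.2 hφ⟩
    exact ⟨ModelType.of _ M⟩

theorem not_isSatisfiable_union_singleton_iff {φ : L.Sentence} :
    ¬ (T ∪ {φ}).IsSatisfiable ↔ T ⊨ᵇ φ.not := by
  rw [isSatisfiable_union_singleton_iff, models_sentence_iff]
  simp only [Sentence.realize_not, not_exists]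

theorem isSatisfiable_union_pair_iff {φ ψ : L.Sentence} :
    (T ∪ {φ, ψ}).IsSatisfiable ↔ (T ∪ {φ ⊓ ψ}).IsSatisfiable := by
  have hmodel : ∀ (M : Type (max u v)) [L.Structure M], M ⊨ T ∪ {φ, ψ} ↔ M ⊨ T ∪ {φ ⊓ ψ} := by
    intro M _
    simp only [model_union_iff, model_insert_iff, model_singleton_iff, Sentence.realize_inf]
  constructor
  · rintro ⟨M⟩
    have := (hmodel M).1 M.is_model
    exact ⟨ModelType.of _ M⟩
  · rintro ⟨M⟩
    have := (hmodel M).2 M.is_model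
    exact ⟨ModelType.of _ M⟩

end Theory

theorem exists_isUniversalSentence_models_iff {α : Type} [Finite α] {φ : L.Formula α}
    (hφ : φ.IsQF) : ∃ σ : L.Sentence, PaperFOL.IsUniversalSentence σ ∧
      ∀ T : L.Theory, T ⊨ᵇ σ ↔ T ⊨ᵇ φ := by
  refine ⟨(φ.relabel Sum.inr : L.Formula (Empty ⊕ α)).iAlls α,
    ⟨_, _, (hφ.relabel _).relabel _, rfl⟩, fun T => ?_⟩
  simp only [Theory.models_formula_iff, Formula.realize_iAlls, Formula.realize_relabel,
    Sum.elim_comp_inr, forall_const]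

end FirstOrder.Language

namespace PaperFOL

open Theory

variable {L : FirstOrder.Language.{u, v}} {T Ts : L.Theory}

namespace CoTheories

theorem models_formula_iff (hco : CoTheories T Ts) {α : Type} [Finite α] {φ : L.Formula α}
    (hφ : φ.IsQF) : T ⊨ᵇ φ ↔ Ts ⊨ᵇ φ := by
  obtain ⟨σ, hσ, hσφ⟩ := exists_isUniversalSentence_models_iff hφ
  rw [← hσφ, ← hσφ, hco σ hσ]

theorem liftT_models_iff (hco : CoTheories T Ts) {α : Type} [Finite α]
    {S : L[[α]].Sentence} (hS : S.IsQF) : liftT α T ⊨ᵇ S ↔ liftT α Ts ⊨ᵇ S := by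
  rw [← Formula.equivSentence.apply_symm_apply S]
  simp only [liftT, ← models_formula_iff_onTheory_models_equivSentence]
  exact hco.models_formula_iff (Formula.isQF_equivSentence_symm hS)

variable {α : Type} [Finite α]

theorem isSatisfiable_liftT_union_iff (hco : CoTheories T Ts) {S : L[[α]].Sentence}
    (hS : S.IsQF) : (liftT α T ∪ {S}).IsSatisfiable ↔ (liftT α Ts ∪ {S}).IsSatisfiable := by
  rw [← not_iff_not, not_isSatisfiable_union_singleton_iff, not_isSatisfiable_union_singleton_iff]
  exact hco.liftT_models_iff hS.not

theorem isSatisfiable_liftT_union_pair_iff (hco : CoTheories T Ts) {φ ψ : L[[α]].Sentence}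
    (hφ : φ.IsQF) (hψ : ψ.IsQF) :
    (liftT α T ∪ {φ, ψ}).IsSatisfiable ↔ (liftT α Ts ∪ {φ, ψ}).IsSatisfiable := by
  rw [isSatisfiable_union_pair_iff, isSatisfiable_union_pair_iff]
  exact hco.isSatisfiable_liftT_union_iff (hφ.inf hψ)

theorem liftT_union_models_iff (hco : CoTheories T Ts) {A C : L[[α]].Sentence}
    (hA : A.IsQF) (hC : C.IsQF) : (liftT α T ∪ {A}) ⊨ᵇ C ↔ (liftT α Ts ∪ {A}) ⊨ᵇ C := by
  simp only [models_iff_not_satisfiable, Set.union_assoc, Set.singleton_union]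
  exact not_congr (hco.isSatisfiable_liftT_union_pair_iff hA hC.not)

variable {nc na nb : ℕ} {A : L[[Fin nc ⊕ Fin na]].Sentence} {B : L[[Fin nc ⊕ Fin nb]].Sentence}

theorem isGroundInterpolant_iff (hco : CoTheories T Ts) (hA : A.IsQF) (hB : B.IsQF)
    {I : L[[Fin nc]].Sentence} : IsGroundInterpolant T A B I ↔ IsGroundInterpolant Ts A B I :=
  and_congr_right fun hI =>
    and_congr (hco.liftT_union_models_iff hA (hI.onBoundedFormula _))
      (not_congr (hco.isSatisfiable_liftT_union_pair_iff hB (hI.onBoundedFormula _)))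

theorem jointlyUnsat_iff (hco : CoTheories T Ts) (hA : A.IsQF) (hB : B.IsQF) :
    JointlyUnsat T A B ↔ JointlyUnsat Ts A B :=
  not_congr <| hco.isSatisfiable_liftT_union_pair_iff (hA.onBoundedFormula _)
    (hB.onBoundedFormula _)

theorem groundInterpolation_iff (hco : CoTheories T Ts) :
    GroundInterpolation T ↔ GroundInterpolation Ts :=
  forall₅_congr fun _ _ _ _ _ => forall₂_congr fun hA hB =>
    imp_congr (hco.jointlyUnsat_iff hA hB)
      (exists_congr fun _ => hco.isGroundInterpolant_iff hA hB)

end CoTheories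

end PaperFOL

/-- ground interpolation transfers from a model companion `T*` down to `T`,
and ground interpolants w.r.t. `T*` are ground interpolants w.r.t. `T`. -/
theorem statement_7 {L : FirstOrder.Language.{u, v}} (T Ts : L.Theory)
    (hmc : PaperFOL.IsModelCompanion.{u, v, max u v} T Ts) :
    (PaperFOL.GroundInterpolation Ts → PaperFOL.GroundInterpolation T) ∧
    (∀ (nc na nb : ℕ) (A : (L[[Fin nc ⊕ Fin na]]).Sentence)
        (B : (L[[Fin nc ⊕ Fin nb]]).Sentence) (I : (L[[Fin nc]]).Sentence),
        A.IsQF → B.IsQF →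
        PaperFOL.IsGroundInterpolant Ts A B I → PaperFOL.IsGroundInterpolant T A B I) :=
  ⟨hmc.1.groundInterpolation_iff.2,
    fun _ _ _ _ _ _ hA hB => (hmc.1.isGroundInterpolant_iff hA hB).2⟩
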